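/- Let a_{μν}(x) be a smooth symmetric matrix of functions on ℝⁿ, invertible at every point with inverse a^{μν}(x), with Christoffel symbols Γ^λ_{μν} := (1/2) a^{λσ} ( ∂_μ a_{σν} + ∂_ν a_{σμ} − ∂_σ a_{μν} ), and define the nonlinear connection N_{μν}(x,k) := k_λ Γ^λ_{μν}(x), so that H^ρ_{μν} := ∂̄^ρ N_{μν} = Γ^ρ_{μν}. Let f₁ : ℝ → (0,∞) be smooth and let g_{μν}(x,k) := a_{μν}(x) f₁(k̄²) with k̄² := a^{μν}(x) k_μ k_ν and inverse g^{μν} = a^{μν}/f₁(k̄²), and let C_ρ^{μν} := −(1/2) g_{ρσ} ( ∂̄^μ g^{σν} + ∂̄^ν g^{σμ} − ∂̄^σ g^{μν} ) be the vertical affine connection. Then the intertwining curvature tensor P^{μρ}_{λν} := ∂̄^ρ H^μ_{λν} − C_λ^{μρ}{}_{;ν} + C_λ^{μσ} P^ρ_{σν} vanishes identically, where P^ρ_{σν} := H^ρ_{σν} − ∂̄^ρ N_{νσ} and C_λ^{μρ}{}_{;ν} := δ_ν C_λ^{μρ} + C_λ^{σρ} H^μ_{σν} + C_λ^{μσ}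 H^ρ_{σν} − C_σ^{μρ} H^σ_{λν} is the horizontal covariant derivative of C. -/

import Mathlib

open scoped BigOperators

/-- Phase space: `ℝⁿ × ℝⁿ` with coordinates `(x, k)`. -/
abbrev Phase (n : ℕ) := (Fin n → ℝ) × (Fin n → ℝ)

/-- Spacetime partial derivative `∂_μ f`. -/
noncomputable def pdx {n : ℕ} (μ : Fin n) (f : Phase n → ℝ) (p : Phase n) : ℝ :=
  fderiv ℝ f p (Pi.single μ 1, 0)

/-- Momentum partial derivative `∂̄^μ f`. -/
noncomputable def pdk {n : ℕ} (μ : Fin n) (f : Phase n → ℝ) (p : Phase n) : ℝ :=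
  fderiv ℝ f p (0, Pi.single μ 1)

/-- Horizontal derivative `δ_μ f = ∂_μ f + N_{νμ} ∂̄^ν f` associated to a
nonlinear connection `N`. -/
noncomputable def hderiv {n : ℕ} (N : Fin n → Fin n → Phase n → ℝ) (μ : Fin n)
    (f : Phase n → ℝ) (p : Phase n) : ℝ :=
  pdx μ f p + ∑ ν, N ν μ p * pdk ν f p

/-- Squared momentum norm `k̄² = a^{μν}(x) k_μ k_ν` built from the inverse metric. -/
noncomputable def kbar2 {n : ℕ} (ainv : (Fin n → ℝ) → Fin n → Fin n → ℝ)
    (p : Phase n) : ℝ :=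
  ∑ μ, ∑ ν, ainv p.1 μ ν * p.2 μ * p.2 ν

/-- Conformal cotangent-bundle metric `g_{μν}(x,k) = a_{μν}(x) f₁(k̄²)`. -/
noncomputable def gConf {n : ℕ} (a ainv : (Fin n → ℝ) → Fin n → Fin n → ℝ)
    (f₁ : ℝ → ℝ) (μ ν : Fin n) (p : Phase n) : ℝ :=
  a p.1 μ ν * f₁ (kbar2 ainv p)

/-- Inverse conformal metric `g^{μν}(x,k) = a^{μν}(x) / f₁(k̄²)`. -/
noncomputable def gConfInv {n : ℕ} (ainv : (Fin n → ℝ) → Fin n → Fin n → ℝ)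
    (f₁ : ℝ → ℝ) (μ ν : Fin n) (p : Phase n) : ℝ :=
  ainv p.1 μ ν / f₁ (kbar2 ainv p)

/-- Vertical affine connection
`C_ρ^{μν} = −(1/2) g_{ρσ} (∂̄^μ g^{σν} + ∂̄^ν g^{σμ} − ∂̄^σ g^{μν})`. -/
noncomputable def Cconn {n : ℕ} (a ainv : (Fin n → ℝ) → Fin n → Fin n → ℝ)
    (f₁ : ℝ → ℝ) (ρ μ ν : Fin n) (p : Phase n) : ℝ :=
  -(1 / 2 : ℝ) * ∑ σ, gConf a ainv f₁ ρ σ p *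
    (pdk μ (gConfInv ainv f₁ σ ν) p + pdk ν (gConfInv ainv f₁ σ μ) p
      - pdk σ (gConfInv ainv f₁ μ ν) p)

/-- Spatial partial derivative on the base manifold `ℝⁿ`. -/
noncomputable def dX {n : ℕ} (μ : Fin n) (f : (Fin n → ℝ) → ℝ) (x : Fin n → ℝ) : ℝ :=
  fderiv ℝ f x (Pi.single μ 1)

/-- Christoffel symbols `Γ^λ_{μν} = (1/2) a^{λσ} (∂_μ a_{σν} + ∂_ν a_{σμ} − ∂_σ a_{μν})`. -/
noncomputable def christoffel {n : ℕ} (a ainv : (Fin n → ℝ) → Fin n → Fin n → ℝ)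
    (lam μ ν : Fin n) (x : Fin n → ℝ) : ℝ :=
  (1 / 2 : ℝ) * ∑ σ, ainv x lam σ *
    (dX μ (fun y => a y σ ν) x + dX ν (fun y => a y σ μ) x - dX σ (fun y => a y μ ν) x)

/-- Nonlinear connection `N_{μν}(x,k) = k_λ Γ^λ_{μν}(x)`. -/
noncomputable def Nlift {n : ℕ} (a ainv : (Fin n → ℝ) → Fin n → Fin n → ℝ)
    (μ ν : Fin n) (p : Phase n) : ℝ :=
  ∑ lam, p.2 lam * christoffel a ainv lam μ ν p.1

/-- Horizontal connection coefficients `H^ρ_{μν} = ∂̄^ρ N_{μν}`. -/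
noncomputable def Hlift {n : ℕ} (a ainv : (Fin n → ℝ) → Fin n → Fin n → ℝ)
    (ρ μ ν : Fin n) (p : Phase n) : ℝ :=
  pdk ρ (Nlift a ainv μ ν) p

/-- The tensor `P^ρ_{σν} = H^ρ_{σν} − ∂̄^ρ N_{νσ}`. -/
noncomputable def Ptens {n : ℕ} (a ainv : (Fin n → ℝ) → Fin n → Fin n → ℝ)
    (ρ σ ν : Fin n) (p : Phase n) : ℝ :=
  Hlift a ainv ρ σ ν p - pdk ρ (Nlift a ainv ν σ) p

/-- Horizontal covariant derivative
`C_λ^{μρ}{}_{;ν} = δ_ν C_λ^{μρ} + C_λ^{σρ} H^μ_{σν} + C_λ^{μσ} H^ρ_{σν} − C_σ^{μρ} H^σ_{λν}`. -/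
noncomputable def Ccov {n : ℕ} (a ainv : (Fin n → ℝ) → Fin n → Fin n → ℝ)
    (f₁ : ℝ → ℝ) (lam μ ρ ν : Fin n) (p : Phase n) : ℝ :=
  hderiv (Nlift a ainv) ν (Cconn a ainv f₁ lam μ ρ) p
    + ∑ σ, Cconn a ainv f₁ lam σ ρ p * Hlift a ainv μ σ ν p
    + ∑ σ, Cconn a ainv f₁ lam μ σ p * Hlift a ainv ρ σ ν p
    - ∑ σ, Cconn a ainv f₁ σ μ ρ p * Hlift a ainv σ lam ν p

/-- Intertwining curvature tensor
`P^{μρ}_{λν} = ∂̄^ρ H^μ_{λν} − C_λ^{μρ}{}_{;ν} + C_λ^{μσ} P^ρ_{σν}`. -/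
noncomputable def Pcurv {n : ℕ} (a ainv : (Fin n → ℝ) → Fin n → Fin n → ℝ)
    (f₁ : ℝ → ℝ) (μ ρ lam ν : Fin n) (p : Phase n) : ℝ :=
  pdk ρ (Hlift a ainv μ lam ν) p - Ccov a ainv f₁ lam μ ρ ν p
    + ∑ σ, Cconn a ainv f₁ lam μ σ p * Ptens a ainv ρ σ ν p

section Toolkit
variable {n : ℕ} {f g : Phase n → ℝ} {p : Phase n} {μ : Fin n}

lemma pdk_add (hf : DifferentiableAt ℝ f p) (hg : DifferentiableAt ℝ g p) :
    pdk μ (fun q => f q + g q) p = pdk μ f p + pdk μ g p := by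
  simp [pdk, fderiv_fun_add hf hg]

lemma pdx_add (hf : DifferentiableAt ℝ f p) (hg : DifferentiableAt ℝ g p) :
    pdx μ (fun q => f q + g q) p = pdx μ f p + pdx μ g p := by
  simp [pdx, fderiv_fun_add hf hg]

lemma pdk_sub (hf : DifferentiableAt ℝ f p) (hg : DifferentiableAt ℝ g p) :
    pdk μ (fun q => f q - g q) p = pdk μ f p - pdk μ g p := by
  simp [pdk, fderiv_fun_sub hf hg]

lemma pdx_sub (hf : DifferentiableAt ℝ f p) (hg : DifferentiableAt ℝ g p) :
    pdx μ (fun q => f q - g q) p = pdx μ f p - pdx μ g p := by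
  simp [pdx, fderiv_fun_sub hf hg]

lemma pdk_mul (hf : DifferentiableAt ℝ f p) (hg : DifferentiableAt ℝ g p) :
    pdk μ (fun q => f q * g q) p = pdk μ f p * g p + f p * pdk μ g p := by
  simp [pdk, fderiv_fun_mul hf hg]; ring

lemma pdx_mul (hf : DifferentiableAt ℝ f p) (hg : DifferentiableAt ℝ g p) :
    pdx μ (fun q => f q * g q) p = pdx μ f p * g p + f p * pdx μ g p := by
  simp [pdx, fderiv_fun_mul hf hg]; ring

lemma pdk_sum {ι : Type*} {s : Finset ι} {F : ι → Phase n → ℝ}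
    (h : ∀ i ∈ s, DifferentiableAt ℝ (F i) p) :
    pdk μ (fun q => ∑ i ∈ s, F i q) p = ∑ i ∈ s, pdk μ (F i) p := by
  simp [pdk, fderiv_fun_sum h]

lemma pdx_sum {ι : Type*} {s : Finset ι} {F : ι → Phase n → ℝ}
    (h : ∀ i ∈ s, DifferentiableAt ℝ (F i) p) :
    pdx μ (fun q => ∑ i ∈ s, F i q) p = ∑ i ∈ s, pdx μ (F i) p := by
  simp [pdx, fderiv_fun_sum h]

lemma pdk_const (c : ℝ) : pdk μ (fun _ => c) p = 0 := by simp [pdk]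
lemma pdx_const (c : ℝ) : pdx μ (fun _ => c) p = 0 := by simp [pdx]

lemma pdk_ofX {g : (Fin n → ℝ) → ℝ} (h : DifferentiableAt ℝ g p.1) :
    pdk μ (fun q : Phase n => g q.1) p = 0 := by
  have : HasFDerivAt (fun q : Phase n => g q.1)
      ((fderiv ℝ g p.1).comp (ContinuousLinearMap.fst ℝ (Fin n → ℝ) (Fin n → ℝ))) p :=
    h.hasFDerivAt.comp p (hasFDerivAt_fst)
  simp [pdk, this.fderiv]

lemma pdx_ofX {g : (Fin n → ℝ) → ℝ} (h : DifferentiableAt ℝ g p.1) :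
    pdx μ (fun q : Phase n => g q.1) p = dX μ g p.1 := by
  have : HasFDerivAt (fun q : Phase n => g q.1)
      ((fderiv ℝ g p.1).comp (ContinuousLinearMap.fst ℝ (Fin n → ℝ) (Fin n → ℝ))) p :=
    h.hasFDerivAt.comp p (hasFDerivAt_fst)
  simp [pdx, this.fderiv, dX]

lemma pdk_k (ν : Fin n) : pdk μ (fun q : Phase n => q.2 ν) p = if ν = μ then 1 else 0 := by
  have : HasFDerivAt (fun q : Phase n => q.2 ν)
      ((ContinuousLinearMap.proj ν).comp (ContinuousLinearMap.snd ℝ (Fin n → ℝ) (Fin n → ℝ))) p := by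
    exact ((ContinuousLinearMap.proj ν).comp
      (ContinuousLinearMap.snd ℝ (Fin n → ℝ) (Fin n → ℝ))).hasFDerivAt
  simp [pdk, this.fderiv, Pi.single_apply]

lemma pdx_k (ν : Fin n) : pdx μ (fun q : Phase n => q.2 ν) p = 0 := by
  have : HasFDerivAt (fun q : Phase n => q.2 ν)
      ((ContinuousLinearMap.proj ν).comp (ContinuousLinearMap.snd ℝ (Fin n → ℝ) (Fin n → ℝ))) p := by
    exact ((ContinuousLinearMap.proj ν).comp
      (ContinuousLinearMap.snd ℝ (Fin n → ℝ) (Fin n → ℝ))).hasFDerivAt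
  simp [pdx, this.fderiv]

lemma pdk_comp {h : ℝ → ℝ} {K : Phase n → ℝ} (hh : DifferentiableAt ℝ h (K p))
    (hK : DifferentiableAt ℝ K p) :
    pdk μ (fun q => h (K q)) p = deriv h (K p) * pdk μ K p := by
  have H : HasFDerivAt (h ∘ K) (deriv h (K p) • fderiv ℝ K p) p :=
    hh.hasDerivAt.comp_hasFDerivAt p hK.hasFDerivAt
  have : pdk μ (h ∘ K) p = deriv h (K p) * pdk μ K p := by
    simp [pdk, H.fderiv]
  exact this

lemma pdx_comp {h : ℝ → ℝ} {K : Phase n → ℝ} (hh : DifferentiableAt ℝ h (K p))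
    (hK : DifferentiableAt ℝ K p) :
    pdx μ (fun q => h (K q)) p = deriv h (K p) * pdx μ K p := by
  have H : HasFDerivAt (h ∘ K) (deriv h (K p) • fderiv ℝ K p) p :=
    hh.hasDerivAt.comp_hasFDerivAt p hK.hasFDerivAt
  have : pdx μ (h ∘ K) p = deriv h (K p) * pdx μ K p := by
    simp [pdx, H.fderiv]
  exact this

end Toolkit

lemma contDiff_finprod {E : Type*} [NormedAddCommGroup E] [NormedSpace ℝ E]
    {ι : Type*} (s : Finset ι) (f : ι → E → ℝ) (h : ∀ i ∈ s, ContDiff ℝ (⊤ : ℕ∞) (f i)) :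
    ContDiff ℝ (⊤ : ℕ∞) (fun x => ∏ i ∈ s, f i x) := by
  classical
  induction s using Finset.cons_induction with
  | empty => simpa using contDiff_const
  | cons i s hi ih =>
    simp only [Finset.prod_cons]
    exact (h i (Finset.mem_cons_self i s)).mul
      (ih fun j hj => h j (Finset.mem_cons_of_mem hj))

lemma contDiff_detfun {n m : ℕ} (M : (Fin n → ℝ) → Matrix (Fin m) (Fin m) ℝ)
    (h : ∀ i j, ContDiff ℝ (⊤ : ℕ∞) fun x => M x i j) :
    ContDiff ℝ (⊤ : ℕ∞) fun x => (M x).det := by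
  simp only [Matrix.det_apply']
  exact ContDiff.sum fun σ _ => contDiff_const.mul
    (contDiff_finprod _ _ fun i _ => h (σ i) i)

section A
variable {n : ℕ} (a ainv : (Fin n → ℝ) → Fin n → Fin n → ℝ)

lemma ainv_symm
    (hasym : ∀ x μ ν, a x μ ν = a x ν μ)
    (hainva : ∀ x μ ν, ∑ σ, a x μ σ * ainv x σ ν = if μ = ν then (1 : ℝ) else 0)
    (haainv : ∀ x μ ν, ∑ σ, ainv x μ σ * a x σ ν = if μ = ν then (1 : ℝ) else 0)
    (x : Fin n → ℝ) (μ ν : Fin n) : ainv x μ ν = ainv x ν μ := by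
  have h1 : ∑ τ, ∑ σ, ainv x τ μ * a x τ σ * ainv x σ ν = ainv x μ ν := by
    rw [Finset.sum_comm]
    calc ∑ σ, ∑ τ, ainv x τ μ * a x τ σ * ainv x σ ν
        = ∑ σ, (∑ τ, a x σ τ * ainv x τ μ) * ainv x σ ν := by
          refine Finset.sum_congr rfl fun σ _ => ?_
          rw [Finset.sum_mul]
          exact Finset.sum_congr rfl fun τ _ => by rw [hasym x τ σ]; ring
      _ = ∑ σ, (if σ = μ then (1:ℝ) else 0) * ainv x σ ν := by
          refine Finset.sum_congr rfl fun σ _ => by rw [hainva]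
      _ = ainv x μ ν := by simp
  have h2 : ∑ τ, ∑ σ, ainv x τ μ * a x τ σ * ainv x σ ν = ainv x ν μ := by
    calc ∑ τ, ∑ σ, ainv x τ μ * a x τ σ * ainv x σ ν
        = ∑ τ, ainv x τ μ * (∑ σ, a x τ σ * ainv x σ ν) := by
          refine Finset.sum_congr rfl fun τ _ => ?_
          rw [Finset.mul_sum]; exact Finset.sum_congr rfl fun σ _ => by ring
      _ = ∑ τ, ainv x τ μ * (if τ = ν then (1:ℝ) else 0) := by
          refine Finset.sum_congr rfl fun τ _ => by rw [hainva]
      _ = ainv x ν μ := by simp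
  rw [← h1, h2]

lemma ainv_contDiff
    (hasmooth : ∀ μ ν, ContDiff ℝ (⊤ : ℕ∞) (fun x => a x μ ν))
    (hainva : ∀ x μ ν, ∑ σ, a x μ σ * ainv x σ ν = if μ = ν then (1 : ℝ) else 0)
    (μ ν : Fin n) : ContDiff ℝ (⊤ : ℕ∞) fun x => ainv x μ ν := by
  classical
  have hright : ∀ x : Fin n → ℝ,
      (Matrix.of (a x)) * (Matrix.of (ainv x)) = 1 := by
    intro x
    ext i j
    simpa [Matrix.mul_apply, Matrix.one_apply] using hainva x i j
  have hinv : ∀ x, Matrix.of (ainv x) = (Matrix.of (a x))⁻¹ := fun x =>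
    (Matrix.inv_eq_right_inv (hright x)).symm
  have hdet : ContDiff ℝ (⊤ : ℕ∞) fun x => (Matrix.of (a x)).det :=
    contDiff_detfun _ fun i j => hasmooth i j
  have hdetne : ∀ x, (Matrix.of (a x)).det ≠ 0 := fun x =>
    Matrix.det_ne_zero_of_right_inverse (hright x)
  have hadj : ContDiff ℝ (⊤ : ℕ∞) fun x => (Matrix.of (a x)).adjugate μ ν := by
    simp only [Matrix.adjugate_apply]
    refine contDiff_detfun _ fun i j => ?_
    by_cases hiν : i = ν
    · subst hiν; simpa [Matrix.updateRow_apply] using contDiff_const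
    · simpa [Matrix.updateRow_apply, hiν] using hasmooth i j
  have heq : (fun x => ainv x μ ν)
      = fun x => ((Matrix.of (a x)).det)⁻¹ * (Matrix.of (a x)).adjugate μ ν := by
    funext x
    have := hinv x
    have h2 : Matrix.of (ainv x) μ ν
        = ((Matrix.of (a x))⁻¹ : Matrix (Fin n) (Fin n) ℝ) μ ν := by rw [this]
    simpa [Matrix.inv_def, Ring.inverse_eq_inv', Matrix.smul_apply, smul_eq_mul] using h2
  rw [heq]
  exact (hdet.inv hdetne).mul hadj

end A


-- helpers
lemma sum_if_one_mul {n : ℕ} (τ : Fin n) (g : Fin n → ℝ) :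
    ∑ α, (if τ = α then (1:ℝ) else 0) * g α = g τ := by simp

lemma mul_sum_comm {n : ℕ} (c : Fin n → ℝ) (F : Fin n → Fin n → ℝ) :
    ∑ ρ, c ρ * ∑ α, F ρ α = ∑ α, ∑ ρ, c ρ * F ρ α := by
  simp only [Finset.mul_sum]; exact Finset.sum_comm

section B
variable {n : ℕ} {f g : (Fin n → ℝ) → ℝ} {x : Fin n → ℝ} {μ : Fin n}

lemma dX_add (hf : DifferentiableAt ℝ f x) (hg : DifferentiableAt ℝ g x) :
    dX μ (fun y => f y + g y) x = dX μ f x + dX μ g x := by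
  simp [dX, fderiv_fun_add hf hg]

lemma dX_mul (hf : DifferentiableAt ℝ f x) (hg : DifferentiableAt ℝ g x) :
    dX μ (fun y => f y * g y) x = dX μ f x * g x + f x * dX μ g x := by
  simp [dX, fderiv_fun_mul hf hg]; ring

lemma dX_sum {ι : Type*} {s : Finset ι} {F : ι → (Fin n → ℝ) → ℝ}
    (h : ∀ i ∈ s, DifferentiableAt ℝ (F i) x) :
    dX μ (fun y => ∑ i ∈ s, F i y) x = ∑ i ∈ s, dX μ (F i) x := by
  simp [dX, fderiv_fun_sum h]

lemma dX_const (c : ℝ) : dX μ (fun _ => c) x = 0 := by simp [dX]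

variable (a ainv : (Fin n → ℝ) → Fin n → Fin n → ℝ)

lemma dXa_contDiff (hasmooth : ∀ μ ν, ContDiff ℝ (⊤ : ℕ∞) (fun x => a x μ ν)) (μ σ ν : Fin n) :
    ContDiff ℝ (⊤ : ℕ∞) (fun x => dX μ (fun y => a y σ ν) x) := by
  exact ((hasmooth σ ν).fderiv_right (by simp)).clm_apply contDiff_const

lemma christoffel_contDiff (hasmooth : ∀ μ ν, ContDiff ℝ (⊤ : ℕ∞) (fun x => a x μ ν))
    (hainvsmooth : ∀ μ ν, ContDiff ℝ (⊤ : ℕ∞) (fun x => ainv x μ ν)) (lam μ ν : Fin n) :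
    ContDiff ℝ (⊤ : ℕ∞) (fun x => christoffel a ainv lam μ ν x) := by
  unfold christoffel
  refine contDiff_const.mul (ContDiff.sum fun σ _ => (hainvsmooth lam σ).mul ?_)
  exact ((dXa_contDiff a hasmooth μ σ ν).add (dXa_contDiff a hasmooth ν σ μ)).sub
    (dXa_contDiff a hasmooth σ μ ν)

lemma christoffel_symm (hasym : ∀ x μ ν, a x μ ν = a x ν μ) (lam μ ν : Fin n) :
    christoffel a ainv lam μ ν x = christoffel a ainv lam ν μ x := by
  unfold christoffel
  congr 1
  refine Finset.sum_congr rfl fun σ _ => ?_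
  have h1 : (fun y => a y μ ν) = fun y => a y ν μ := funext fun y => hasym y μ ν
  rw [h1]; ring

lemma aGamma (hainva : ∀ x μ ν, ∑ σ, a x μ σ * ainv x σ ν = if μ = ν then (1 : ℝ) else 0)
    (τ σ ν : Fin n) :
    ∑ ρ, a x τ ρ * christoffel a ainv ρ σ ν x
      = (1 / 2 : ℝ) * (dX σ (fun y => a y τ ν) x + dX ν (fun y => a y τ σ) x
          - dX τ (fun y => a y σ ν) x) := by
  unfold christoffel
  calc ∑ ρ, a x τ ρ * ((1 / 2 : ℝ) * ∑ α, ainv x ρ α *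
        (dX σ (fun y => a y α ν) x + dX ν (fun y => a y α σ) x - dX α (fun y => a y σ ν) x))
      = ∑ ρ, ∑ α, (a x τ ρ * ainv x ρ α) * ((1 / 2 : ℝ) *
        (dX σ (fun y => a y α ν) x + dX ν (fun y => a y α σ) x - dX α (fun y => a y σ ν) x)) := by
        refine Finset.sum_congr rfl fun ρ _ => ?_
        rw [Finset.mul_sum, Finset.mul_sum]
        exact Finset.sum_congr rfl fun α _ => by ring
    _ = ∑ α, (∑ ρ, a x τ ρ * ainv x ρ α) * ((1 / 2 : ℝ) *
        (dX σ (fun y => a y α ν) x + dX ν (fun y => a y α σ) x - dX α (fun y => a y σ ν) x)) := by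
        rw [Finset.sum_comm]
        exact Finset.sum_congr rfl fun α _ => (Finset.sum_mul _ _ _).symm
    _ = ∑ α, (if τ = α then (1:ℝ) else 0) * ((1 / 2 : ℝ) *
        (dX σ (fun y => a y α ν) x + dX ν (fun y => a y α σ) x - dX α (fun y => a y σ ν) x)) := by
        refine Finset.sum_congr rfl fun α _ => by rw [hainva]
    _ = _ := sum_if_one_mul τ _

lemma dA_eq (hasym : ∀ x μ ν, a x μ ν = a x ν μ)
    (hainva : ∀ x μ ν, ∑ σ, a x μ σ * ainv x σ ν = if μ = ν then (1 : ℝ) else 0)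
    (σ τ ν : Fin n) :
    dX ν (fun y => a y σ τ) x
      = ∑ ρ, christoffel a ainv ρ σ ν x * a x ρ τ
        + ∑ ρ, christoffel a ainv ρ τ ν x * a x ρ σ := by
  have h1 : ∑ ρ, christoffel a ainv ρ σ ν x * a x ρ τ
      = (1 / 2 : ℝ) * (dX σ (fun y => a y τ ν) x + dX ν (fun y => a y τ σ) x
          - dX τ (fun y => a y σ ν) x) := by
    rw [← aGamma (x := x) a ainv hainva τ σ ν]
    exact Finset.sum_congr rfl fun ρ _ => by rw [hasym x ρ τ]; ring
  have h2 : ∑ ρ, christoffel a ainv ρ τ ν x * a x ρ σ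
      = (1 / 2 : ℝ) * (dX τ (fun y => a y σ ν) x + dX ν (fun y => a y σ τ) x
          - dX σ (fun y => a y τ ν) x) := by
    rw [← aGamma (x := x) a ainv hainva σ τ ν]
    exact Finset.sum_congr rfl fun ρ _ => by rw [hasym x ρ σ]; ring
  have h3 : dX ν (fun y => a y τ σ) x = dX ν (fun y => a y σ τ) x := by
    have : (fun y => a y τ σ) = fun y => a y σ τ := funext fun y => hasym y τ σ
    rw [this]
  rw [h1, h2, h3]; ring

lemma dAinv (hasmooth : ∀ μ ν, ContDiff ℝ (⊤ : ℕ∞) (fun x => a x μ ν))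
    (hainvsmooth : ∀ μ ν, ContDiff ℝ (⊤ : ℕ∞) (fun x => ainv x μ ν))
    (hasym : ∀ x μ ν, a x μ ν = a x ν μ)
    (hainva : ∀ x μ ν, ∑ σ, a x μ σ * ainv x σ ν = if μ = ν then (1 : ℝ) else 0)
    (haainv : ∀ x μ ν, ∑ σ, ainv x μ σ * a x σ ν = if μ = ν then (1 : ℝ) else 0)
    (α ν τ : Fin n) :
    dX τ (fun y => ainv y α ν) x
      = -(∑ σ, ainv x α σ * christoffel a ainv ν σ τ x)
        - ∑ σ, christoffel a ainv α σ τ x * ainv x σ ν := by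
  have hda : ∀ μ ν' x', DifferentiableAt ℝ (fun y => a y μ ν') x' := fun μ ν' x' =>
    ((hasmooth μ ν').differentiable (by simp)).differentiableAt
  have hdainv : ∀ μ ν' x', DifferentiableAt ℝ (fun y => ainv y μ ν') x' := fun μ ν' x' =>
    ((hainvsmooth μ ν').differentiable (by simp)).differentiableAt
  have step1 : ∀ μ ν', ∑ σ, (dX τ (fun y => a y μ σ) x * ainv x σ ν'
      + a x μ σ * dX τ (fun y => ainv y σ ν') x) = 0 := by
    intro μ ν'
    have hconst : dX τ (fun y => ∑ σ, a y μ σ * ainv y σ ν') x = 0 := by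
      have : (fun y => ∑ σ, a y μ σ * ainv y σ ν')
          = fun _ => (if μ = ν' then (1:ℝ) else 0) := funext fun y => hainva y μ ν'
      rw [this, dX_const]
    rw [dX_sum (fun σ _ => ((hda μ σ x).fun_mul (hdainv σ ν' x)))] at hconst
    rw [← hconst]
    exact Finset.sum_congr rfl fun σ _ => (dX_mul (hda μ σ x) (hdainv σ ν' x)).symm
  have step2 : dX τ (fun y => ainv y α ν) x
      = -∑ μ, ainv x α μ * ∑ σ, dX τ (fun y => a y μ σ) x * ainv x σ ν := by
    have e1 : ∑ μ, ainv x α μ * ∑ σ, (dX τ (fun y => a y μ σ) x * ainv x σ ν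
        + a x μ σ * dX τ (fun y => ainv y σ ν) x) = 0 := by
      simp only [step1, mul_zero, Finset.sum_const_zero]
    have e3 : ∑ μ, ainv x α μ * ∑ σ, a x μ σ * dX τ (fun y => ainv y σ ν) x
        = dX τ (fun y => ainv y α ν) x := by
      calc ∑ μ, ainv x α μ * ∑ σ, a x μ σ * dX τ (fun y => ainv y σ ν) x
          = ∑ σ, ∑ μ, ainv x α μ * (a x μ σ * dX τ (fun y => ainv y σ ν) x) :=
            mul_sum_comm _ _
        _ = ∑ σ, (∑ μ, ainv x α μ * a x μ σ) * dX τ (fun y => ainv y σ ν) x := by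
            refine Finset.sum_congr rfl fun σ _ => ?_
            rw [Finset.sum_mul]
            exact Finset.sum_congr rfl fun μ _ => by ring
        _ = ∑ σ, (if α = σ then (1:ℝ) else 0) * dX τ (fun y => ainv y σ ν) x := by
            refine Finset.sum_congr rfl fun σ _ => by rw [haainv]
        _ = _ := sum_if_one_mul α _
    have e2 : ∑ μ, ainv x α μ * ∑ σ, (dX τ (fun y => a y μ σ) x * ainv x σ ν
        + a x μ σ * dX τ (fun y => ainv y σ ν) x)
        = (∑ μ, ainv x α μ * ∑ σ, dX τ (fun y => a y μ σ) x * ainv x σ ν)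
          + dX τ (fun y => ainv y α ν) x := by
      rw [← e3, ← Finset.sum_add_distrib]
      refine Finset.sum_congr rfl fun μ _ => ?_
      rw [← mul_add, ← Finset.sum_add_distrib]
    rw [e2] at e1
    linarith
  -- step 3: substitute dA_eq
  rw [step2]
  have expand : ∀ μ, ∑ σ, dX τ (fun y => a y μ σ) x * ainv x σ ν
      = (∑ ρ, christoffel a ainv ρ μ τ x * (∑ σ, a x ρ σ * ainv x σ ν))
        + ∑ σ, (∑ ρ, christoffel a ainv ρ σ τ x * a x ρ μ) * ainv x σ ν := by
    intro μ
    calc ∑ σ, dX τ (fun y => a y μ σ) x * ainv x σ ν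
        = ∑ σ, ((∑ ρ, christoffel a ainv ρ μ τ x * a x ρ σ)
            + ∑ ρ, christoffel a ainv ρ σ τ x * a x ρ μ) * ainv x σ ν := by
          refine Finset.sum_congr rfl fun σ _ => ?_
          rw [dA_eq a ainv hasym hainva μ σ τ]
      _ = (∑ σ, (∑ ρ, christoffel a ainv ρ μ τ x * a x ρ σ) * ainv x σ ν)
          + ∑ σ, (∑ ρ, christoffel a ainv ρ σ τ x * a x ρ μ) * ainv x σ ν := by
          rw [← Finset.sum_add_distrib]
          exact Finset.sum_congr rfl fun σ _ => by ring
      _ = (∑ ρ, christoffel a ainv ρ μ τ x * (∑ σ, a x ρ σ * ainv x σ ν))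
          + ∑ σ, (∑ ρ, christoffel a ainv ρ σ τ x * a x ρ μ) * ainv x σ ν := by
          congr 1
          calc ∑ σ, (∑ ρ, christoffel a ainv ρ μ τ x * a x ρ σ) * ainv x σ ν
              = ∑ ρ, ∑ σ, christoffel a ainv ρ μ τ x * (a x ρ σ * ainv x σ ν) := by
                rw [Finset.sum_comm]
                refine Finset.sum_congr rfl fun σ _ => ?_
                rw [Finset.sum_mul]
                exact Finset.sum_congr rfl fun ρ _ => by ring
            _ = _ := by
                refine Finset.sum_congr rfl fun ρ _ => ?_
                rw [Finset.mul_sum]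
  have partA : ∑ μ, ainv x α μ * ((∑ ρ, christoffel a ainv ρ μ τ x * (∑ σ, a x ρ σ * ainv x σ ν)))
      = ∑ σ, ainv x α σ * christoffel a ainv ν σ τ x := by
    refine Finset.sum_congr rfl fun μ _ => ?_
    congr 1
    calc ∑ ρ, christoffel a ainv ρ μ τ x * (∑ σ, a x ρ σ * ainv x σ ν)
        = ∑ ρ, christoffel a ainv ρ μ τ x * (if ρ = ν then (1:ℝ) else 0) := by
          refine Finset.sum_congr rfl fun ρ _ => by rw [hainva]
      _ = christoffel a ainv ν μ τ x := by simp
  have partB : ∑ μ, ainv x α μ * (∑ σ, (∑ ρ, christoffel a ainv ρ σ τ x * a x ρ μ) * ainv x σ ν)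
      = ∑ σ, christoffel a ainv α σ τ x * ainv x σ ν := by
    calc ∑ μ, ainv x α μ * (∑ σ, (∑ ρ, christoffel a ainv ρ σ τ x * a x ρ μ) * ainv x σ ν)
        = ∑ σ, ∑ μ, ainv x α μ * ((∑ ρ, christoffel a ainv ρ σ τ x * a x ρ μ) * ainv x σ ν) :=
          mul_sum_comm _ _
      _ = ∑ σ, (∑ ρ, christoffel a ainv ρ σ τ x * (∑ μ, ainv x α μ * a x μ ρ)) * ainv x σ ν := by
          refine Finset.sum_congr rfl fun σ _ => ?_
          congr 1
          calc ∑ μ, ainv x α μ * ((∑ ρ, christoffel a ainv ρ σ τ x * a x ρ μ) * ainv x σ ν)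
              = ∑ μ, ∑ ρ, ainv x α μ * christoffel a ainv ρ σ τ x * a x ρ μ * ainv x σ ν := by
                refine Finset.sum_congr rfl fun μ _ => ?_
                rw [Finset.sum_mul, Finset.mul_sum]
                exact Finset.sum_congr rfl fun ρ _ => by ring
            _ = ∑ ρ, ∑ μ, ainv x α μ * christoffel a ainv ρ σ τ x * a x ρ μ * ainv x σ ν :=
                Finset.sum_comm
            _ = (∑ ρ, christoffel a ainv ρ σ τ x * (∑ μ, ainv x α μ * a x μ ρ)) * ainv x σ ν := by
                rw [Finset.sum_mul]
                refine Finset.sum_congr rfl fun ρ _ => ?_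
                rw [Finset.mul_sum, Finset.sum_mul]
                refine Finset.sum_congr rfl fun μ _ => ?_
                rw [hasym x ρ μ]; ring
      _ = ∑ σ, (∑ ρ, christoffel a ainv ρ σ τ x * (if α = ρ then (1:ℝ) else 0)) * ainv x σ ν := by
          refine Finset.sum_congr rfl fun σ _ => ?_
          congr 1
          refine Finset.sum_congr rfl fun ρ _ => by rw [haainv]
      _ = ∑ σ, christoffel a ainv α σ τ x * ainv x σ ν := by
          refine Finset.sum_congr rfl fun σ _ => ?_
          congr 1
          simp
  calc -∑ μ, ainv x α μ * ∑ σ, dX τ (fun y => a y μ σ) x * ainv x σ ν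
      = -∑ μ, (ainv x α μ * ((∑ ρ, christoffel a ainv ρ μ τ x * (∑ σ, a x ρ σ * ainv x σ ν)))
          + ainv x α μ * (∑ σ, (∑ ρ, christoffel a ainv ρ σ τ x * a x ρ μ) * ainv x σ ν)) := by
        congr 1
        refine Finset.sum_congr rfl fun μ _ => ?_
        rw [expand μ, mul_add]
    _ = -(∑ σ, ainv x α σ * christoffel a ainv ν σ τ x)
        - ∑ σ, christoffel a ainv α σ τ x * ainv x σ ν := by
        rw [Finset.sum_add_distrib, partA, partB]; ring
end B


/-! ### Chunk C: phase-space smoothness and basic derivatives -/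

noncomputable def kup {n : ℕ} (ainv : (Fin n → ℝ) → Fin n → Fin n → ℝ)
    (μ : Fin n) (p : Phase n) : ℝ := ∑ α, ainv p.1 μ α * p.2 α

noncomputable def Gc (f₁ : ℝ → ℝ) (t : ℝ) : ℝ := deriv f₁ t / f₁ t

noncomputable def Tex {n : ℕ} (ainv : (Fin n → ℝ) → Fin n → Fin n → ℝ)
    (lam μ ρ : Fin n) (p : Phase n) : ℝ :=
  (if lam = ρ then kup ainv μ p else 0) + (if lam = μ then kup ainv ρ p else 0)
    - ainv p.1 μ ρ * p.2 lam

noncomputable def Cex {n : ℕ} (ainv : (Fin n → ℝ) → Fin n → Fin n → ℝ) (f₁ : ℝ → ℝ)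
    (lam μ ρ : Fin n) (p : Phase n) : ℝ :=
  Gc f₁ (kbar2 ainv p) * Tex ainv lam μ ρ p

section C
variable {n : ℕ}

lemma contDiff_ofX {g : (Fin n → ℝ) → ℝ} (h : ContDiff ℝ (⊤ : ℕ∞) g) :
    ContDiff ℝ (⊤ : ℕ∞) (fun p : Phase n => g p.1) := h.comp contDiff_fst

lemma contDiff_coordk (ν : Fin n) : ContDiff ℝ (⊤ : ℕ∞) (fun p : Phase n => p.2 ν) :=
  ((ContinuousLinearMap.proj ν).comp
    (ContinuousLinearMap.snd ℝ (Fin n → ℝ) (Fin n → ℝ))).contDiff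

variable (a ainv : (Fin n → ℝ) → Fin n → Fin n → ℝ)

lemma kup_contDiff (hainvs : ∀ μ ν, ContDiff ℝ (⊤ : ℕ∞) (fun x => ainv x μ ν)) (μ : Fin n) :
    ContDiff ℝ (⊤ : ℕ∞) (kup ainv μ) := by
  unfold kup
  exact ContDiff.sum fun α _ => (contDiff_ofX (hainvs μ α)).mul (contDiff_coordk α)

lemma kbar2_contDiff (hainvs : ∀ μ ν, ContDiff ℝ (⊤ : ℕ∞) (fun x => ainv x μ ν)) :
    ContDiff ℝ (⊤ : ℕ∞) (kbar2 ainv) := by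
  unfold kbar2
  exact ContDiff.sum fun μ _ => ContDiff.sum fun ν _ =>
    (((contDiff_ofX (hainvs μ ν)).mul (contDiff_coordk μ))).mul (contDiff_coordk ν)

lemma Nlift_contDiff (hasmooth : ∀ μ ν, ContDiff ℝ (⊤ : ℕ∞) (fun x => a x μ ν))
    (hainvs : ∀ μ ν, ContDiff ℝ (⊤ : ℕ∞) (fun x => ainv x μ ν)) (μ ν : Fin n) :
    ContDiff ℝ (⊤ : ℕ∞) (Nlift a ainv μ ν) := by
  unfold Nlift
  exact ContDiff.sum fun lam _ => (contDiff_coordk lam).mul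
    (contDiff_ofX (christoffel_contDiff a ainv hasmooth hainvs lam μ ν))

lemma Tex_contDiff (hainvs : ∀ μ ν, ContDiff ℝ (⊤ : ℕ∞) (fun x => ainv x μ ν)) (lam μ ρ : Fin n) :
    ContDiff ℝ (⊤ : ℕ∞) (Tex ainv lam μ ρ) := by
  unfold Tex
  refine ContDiff.sub (ContDiff.add ?_ ?_) ((contDiff_ofX (hainvs μ ρ)).mul (contDiff_coordk lam))
  · by_cases h : lam = ρ <;> simp [h, kup_contDiff ainv hainvs, contDiff_const]
  · by_cases h : lam = μ <;> simp [h, kup_contDiff ainv hainvs, contDiff_const]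

lemma derivf₁_contDiff {f₁ : ℝ → ℝ} (hf₁ : ContDiff ℝ (⊤ : ℕ∞) f₁) : ContDiff ℝ (⊤ : ℕ∞) (deriv f₁) := by
  have : deriv f₁ = fun t => (fderiv ℝ f₁ t) 1 := by
    funext t; rw [fderiv_apply_one_eq_deriv]
  rw [this]
  exact (hf₁.fderiv_right (by simp)).clm_apply contDiff_const

lemma Gc_contDiff {f₁ : ℝ → ℝ} (hf₁ : ContDiff ℝ (⊤ : ℕ∞) f₁) (hf₁pos : ∀ t, 0 < f₁ t) :
    ContDiff ℝ (⊤ : ℕ∞) (Gc f₁) := by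
  unfold Gc
  exact (derivf₁_contDiff hf₁).div hf₁ (fun t => (hf₁pos t).ne')

lemma Cex_contDiff {f₁ : ℝ → ℝ} (hf₁ : ContDiff ℝ (⊤ : ℕ∞) f₁) (hf₁pos : ∀ t, 0 < f₁ t)
    (hainvs : ∀ μ ν, ContDiff ℝ (⊤ : ℕ∞) (fun x => ainv x μ ν)) (lam μ ρ : Fin n) :
    ContDiff ℝ (⊤ : ℕ∞) (Cex ainv f₁ lam μ ρ) := by
  unfold Cex
  exact ((Gc_contDiff hf₁ hf₁pos).comp (kbar2_contDiff ainv hainvs)).mul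
    (Tex_contDiff ainv hainvs lam μ ρ)

/-- pdk of kup -/
lemma pdk_kup (hainvs : ∀ μ ν, ContDiff ℝ (⊤ : ℕ∞) (fun x => ainv x μ ν)) (μ σ : Fin n)
    (p : Phase n) : pdk σ (kup ainv μ) p = ainv p.1 μ σ := by
  have hd : ∀ α (q : Phase n), DifferentiableAt ℝ (fun q : Phase n => ainv q.1 μ α) q :=
    fun α q => ((contDiff_ofX (hainvs μ α)).differentiable (by simp)).differentiableAt
  have hk : ∀ α (q : Phase n), DifferentiableAt ℝ (fun q : Phase n => q.2 α) q :=
    fun α q => ((contDiff_coordk α).differentiable (by simp)).differentiableAt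
  unfold kup
  rw [pdk_sum (fun α _ => (hd α p).fun_mul (hk α p))]
  calc ∑ α, pdk σ (fun q : Phase n => ainv q.1 μ α * q.2 α) p
      = ∑ α, (0 * p.2 α + ainv p.1 μ α * (if α = σ then (1:ℝ) else 0)) := by
        refine Finset.sum_congr rfl fun α _ => ?_
        rw [pdk_mul (hd α p) (hk α p), pdk_ofX
          (((hainvs μ α).differentiable (by simp)).differentiableAt), pdk_k]
    _ = ainv p.1 μ σ := by simp

lemma pdx_kup_raw (hainvs : ∀ μ ν, ContDiff ℝ (⊤ : ℕ∞) (fun x => ainv x μ ν)) (μ ν : Fin n)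
    (p : Phase n) :
    pdx ν (kup ainv μ) p = ∑ α, dX ν (fun y => ainv y μ α) p.1 * p.2 α := by
  have hd : ∀ α (q : Phase n), DifferentiableAt ℝ (fun q : Phase n => ainv q.1 μ α) q :=
    fun α q => ((contDiff_ofX (hainvs μ α)).differentiable (by simp)).differentiableAt
  have hk : ∀ α (q : Phase n), DifferentiableAt ℝ (fun q : Phase n => q.2 α) q :=
    fun α q => ((contDiff_coordk α).differentiable (by simp)).differentiableAt
  unfold kup
  rw [pdx_sum (fun α _ => (hd α p).fun_mul (hk α p))]
  refine Finset.sum_congr rfl fun α _ => ?_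
  rw [pdx_mul (hd α p) (hk α p), pdx_ofX (((hainvs μ α).differentiable (by simp)).differentiableAt),
    pdx_k]
  ring

/-- pdk of kbar2 -/
lemma pdk_kbar2 (hainvs : ∀ μ ν, ContDiff ℝ (⊤ : ℕ∞) (fun x => ainv x μ ν))
    (hainvsym : ∀ x μ ν, ainv x μ ν = ainv x ν μ) (σ : Fin n) (p : Phase n) :
    pdk σ (kbar2 ainv) p = 2 * kup ainv σ p := by
  have hd : ∀ μ α (q : Phase n), DifferentiableAt ℝ (fun q : Phase n => ainv q.1 μ α) q :=
    fun μ α q => ((contDiff_ofX (hainvs μ α)).differentiable (by simp)).differentiableAt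
  have hk : ∀ α (q : Phase n), DifferentiableAt ℝ (fun q : Phase n => q.2 α) q :=
    fun α q => ((contDiff_coordk α).differentiable (by simp)).differentiableAt
  have hterm : ∀ μ α (q : Phase n),
      DifferentiableAt ℝ (fun q : Phase n => ainv q.1 μ α * q.2 μ * q.2 α) q :=
    fun μ α q => ((hd μ α q).mul (hk μ q)).mul (hk α q)
  unfold kbar2
  rw [pdk_sum (fun μ _ => by
    exact DifferentiableAt.fun_sum fun α _ => hterm μ α p)]
  calc ∑ μ, pdk σ (fun q : Phase n => ∑ α, ainv q.1 μ α * q.2 μ * q.2 α) p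
      = ∑ μ, ∑ α, (ainv p.1 μ α * (if μ = σ then (1:ℝ) else 0) * p.2 α
          + ainv p.1 μ α * p.2 μ * (if α = σ then (1:ℝ) else 0)) := by
        refine Finset.sum_congr rfl fun μ _ => ?_
        rw [pdk_sum (fun α _ => hterm μ α p)]
        refine Finset.sum_congr rfl fun α _ => ?_
        rw [pdk_mul ((hd μ α p).fun_mul (hk μ p)) (hk α p),
          pdk_mul (hd μ α p) (hk μ p), pdk_ofX
          (((hainvs μ α).differentiable (by simp)).differentiableAt), pdk_k, pdk_k]
        ring
    _ = (∑ α, ainv p.1 σ α * p.2 α) + ∑ μ, ainv p.1 μ σ * p.2 μ := by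
        simp only [Finset.sum_add_distrib]
        congr 1
        · rw [Finset.sum_comm]
          simp [mul_ite, ite_mul, mul_one, mul_zero, zero_mul]
        · simp [mul_ite, ite_mul, mul_one, mul_zero, zero_mul]
    _ = 2 * kup ainv σ p := by
        unfold kup
        have : ∑ μ, ainv p.1 μ σ * p.2 μ = ∑ μ, ainv p.1 σ μ * p.2 μ :=
          Finset.sum_congr rfl fun μ _ => by rw [hainvsym p.1 μ σ]
        rw [this]; ring

/-- Hlift equals the Christoffel symbol. -/
lemma Hlift_eq (hasmooth : ∀ μ ν, ContDiff ℝ (⊤ : ℕ∞) (fun x => a x μ ν))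
    (hainvs : ∀ μ ν, ContDiff ℝ (⊤ : ℕ∞) (fun x => ainv x μ ν)) (ρ μ ν : Fin n) (p : Phase n) :
    Hlift a ainv ρ μ ν p = christoffel a ainv ρ μ ν p.1 := by
  have hG : ∀ lam (q : Phase n),
      DifferentiableAt ℝ (fun q : Phase n => christoffel a ainv lam μ ν q.1) q :=
    fun lam q => ((contDiff_ofX
      (christoffel_contDiff a ainv hasmooth hainvs lam μ ν)).differentiable (by simp)).differentiableAt
  have hk : ∀ α (q : Phase n), DifferentiableAt ℝ (fun q : Phase n => q.2 α) q :=
    fun α q => ((contDiff_coordk α).differentiable (by simp)).differentiableAt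
  unfold Hlift Nlift
  rw [pdk_sum (fun lam _ => (hk lam p).fun_mul (hG lam p))]
  calc ∑ lam, pdk ρ (fun q : Phase n => q.2 lam * christoffel a ainv lam μ ν q.1) p
      = ∑ lam, ((if lam = ρ then (1:ℝ) else 0) * christoffel a ainv lam μ ν p.1
          + p.2 lam * 0) := by
        refine Finset.sum_congr rfl fun lam _ => ?_
        rw [pdk_mul (hk lam p) (hG lam p), pdk_k, pdk_ofX
          (((christoffel_contDiff a ainv hasmooth hainvs lam μ ν).differentiable
            (by simp)).differentiableAt)]
    _ = christoffel a ainv ρ μ ν p.1 := by simp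

lemma Nlift_symm (hasym : ∀ x μ ν, a x μ ν = a x ν μ) (μ ν : Fin n) :
    Nlift a ainv μ ν = Nlift a ainv ν μ := by
  funext p
  unfold Nlift
  exact Finset.sum_congr rfl fun lam _ => by
    rw [christoffel_symm a ainv hasym lam μ ν]

lemma Ptens_zero (hasmooth : ∀ μ ν, ContDiff ℝ (⊤ : ℕ∞) (fun x => a x μ ν))
    (hainvs : ∀ μ ν, ContDiff ℝ (⊤ : ℕ∞) (fun x => ainv x μ ν))
    (hasym : ∀ x μ ν, a x μ ν = a x ν μ) (ρ σ ν : Fin n) (p : Phase n) :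
    Ptens a ainv ρ σ ν p = 0 := by
  unfold Ptens
  rw [Nlift_symm a ainv hasym ν σ]
  have : pdk ρ (Nlift a ainv σ ν) p = Hlift a ainv ρ σ ν p := rfl
  rw [this, sub_self]

lemma pdk_Hlift (hasmooth : ∀ μ ν, ContDiff ℝ (⊤ : ℕ∞) (fun x => a x μ ν))
    (hainvs : ∀ μ ν, ContDiff ℝ (⊤ : ℕ∞) (fun x => ainv x μ ν)) (ρ μ lam ν : Fin n) (p : Phase n) :
    pdk ρ (Hlift a ainv μ lam ν) p = 0 := by
  have : Hlift a ainv μ lam ν = fun q : Phase n => christoffel a ainv μ lam ν q.1 :=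
    funext fun q => Hlift_eq a ainv hasmooth hainvs μ lam ν q
  rw [this]
  exact pdk_ofX (((christoffel_contDiff a ainv hasmooth hainvs μ lam ν).differentiable
    (by simp)).differentiableAt)

end C


/-! ### Chunk D: pdx of kbar2/kup in canonical form, Cconn explicit formula -/

lemma sum_comm3 {n : ℕ} (F : Fin n → Fin n → Fin n → ℝ) :
    ∑ μ, ∑ α, ∑ σ, F μ α σ = ∑ σ, ∑ μ, ∑ α, F μ α σ := by
  have h1 : ∑ μ, ∑ α, ∑ σ, F μ α σ = ∑ μ, ∑ σ, ∑ α, F μ α σ :=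
    Finset.sum_congr rfl fun μ _ => Finset.sum_comm
  rw [h1]; exact Finset.sum_comm

section D
variable {n : ℕ} (a ainv : (Fin n → ℝ) → Fin n → Fin n → ℝ)

lemma pdx_kbar2_raw (hainvs : ∀ μ ν, ContDiff ℝ (⊤ : ℕ∞) (fun x => ainv x μ ν)) (ν : Fin n)
    (p : Phase n) :
    pdx ν (kbar2 ainv) p = ∑ μ, ∑ α, dX ν (fun y => ainv y μ α) p.1 * p.2 μ * p.2 α := by
  have hd : ∀ μ α (q : Phase n), DifferentiableAt ℝ (fun q : Phase n => ainv q.1 μ α) q :=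
    fun μ α q => ((contDiff_ofX (hainvs μ α)).differentiable (by simp)).differentiableAt
  have hk : ∀ α (q : Phase n), DifferentiableAt ℝ (fun q : Phase n => q.2 α) q :=
    fun α q => ((contDiff_coordk α).differentiable (by simp)).differentiableAt
  have hterm : ∀ μ α (q : Phase n),
      DifferentiableAt ℝ (fun q : Phase n => ainv q.1 μ α * q.2 μ * q.2 α) q :=
    fun μ α q => ((hd μ α q).mul (hk μ q)).mul (hk α q)
  unfold kbar2
  rw [pdx_sum (fun μ _ => DifferentiableAt.fun_sum fun α _ => hterm μ α p)]
  refine Finset.sum_congr rfl fun μ _ => ?_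
  rw [pdx_sum (fun α _ => hterm μ α p)]
  refine Finset.sum_congr rfl fun α _ => ?_
  rw [pdx_mul ((hd μ α p).fun_mul (hk μ p)) (hk α p), pdx_mul (hd μ α p) (hk μ p),
    pdx_ofX (((hainvs μ α).differentiable (by simp)).differentiableAt), pdx_k, pdx_k]
  ring

lemma kup_eq_symm (hainvsym : ∀ x μ ν, ainv x μ ν = ainv x ν μ) (σ : Fin n) (p : Phase n) :
    ∑ μ, ainv p.1 μ σ * p.2 μ = kup ainv σ p := by
  unfold kup
  exact Finset.sum_congr rfl fun μ _ => by rw [hainvsym p.1 μ σ]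

lemma Nlift_comm (σ ν : Fin n) (p : Phase n) :
    ∑ α, christoffel a ainv α σ ν p.1 * p.2 α = Nlift a ainv σ ν p := by
  unfold Nlift
  exact Finset.sum_congr rfl fun α _ => by ring

variable (hasmooth : ∀ μ ν, ContDiff ℝ (⊤ : ℕ∞) (fun x => a x μ ν))
  (hainvs : ∀ μ ν, ContDiff ℝ (⊤ : ℕ∞) (fun x => ainv x μ ν))
  (hasym : ∀ x μ ν, a x μ ν = a x ν μ)
  (hainvsym : ∀ x μ ν, ainv x μ ν = ainv x ν μ)
  (hainva : ∀ x μ ν, ∑ σ, a x μ σ * ainv x σ ν = if μ = ν then (1 : ℝ) else 0)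
  (haainv : ∀ x μ ν, ∑ σ, ainv x μ σ * a x σ ν = if μ = ν then (1 : ℝ) else 0)

include hasmooth hainvs hasym hainva haainv in
lemma pdx_kup (μ ν : Fin n) (p : Phase n) :
    pdx ν (kup ainv μ) p
      = -(∑ σ, Nlift a ainv σ ν p * ainv p.1 μ σ)
        - ∑ σ, christoffel a ainv μ σ ν p.1 * kup ainv σ p := by
  rw [pdx_kup_raw ainv hainvs μ ν p]
  calc ∑ α, dX ν (fun y => ainv y μ α) p.1 * p.2 α
      = ∑ α, ((-(∑ σ, ainv p.1 μ σ * christoffel a ainv α σ ν p.1)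
          - ∑ σ, christoffel a ainv μ σ ν p.1 * ainv p.1 σ α) * p.2 α) := by
        refine Finset.sum_congr rfl fun α _ => ?_
        rw [dAinv a ainv hasmooth hainvs hasym hainva haainv μ α ν]
    _ = -(∑ α, ∑ σ, ainv p.1 μ σ * christoffel a ainv α σ ν p.1 * p.2 α)
        - ∑ α, ∑ σ, christoffel a ainv μ σ ν p.1 * ainv p.1 σ α * p.2 α := by
        simp only [sub_mul, neg_mul, Finset.sum_mul, Finset.sum_sub_distrib,
          Finset.sum_neg_distrib]
    _ = -(∑ σ, Nlift a ainv σ ν p * ainv p.1 μ σ)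
        - ∑ σ, christoffel a ainv μ σ ν p.1 * kup ainv σ p := by
        congr 1
        · rw [Finset.sum_comm]
          refine congrArg _ (Finset.sum_congr rfl fun σ _ => ?_)
          rw [← Nlift_comm a ainv σ ν p, Finset.sum_mul]
          refine Finset.sum_congr rfl fun α _ => by ring
        · rw [Finset.sum_comm]
          refine Finset.sum_congr rfl fun σ _ => ?_
          unfold kup
          rw [Finset.mul_sum]
          exact Finset.sum_congr rfl fun α _ => by ring

include hasmooth hainvs hasym hainvsym hainva haainv in
lemma pdx_kbar2 (ν : Fin n) (p : Phase n) :
    pdx ν (kbar2 ainv) p = -(2 * ∑ σ, Nlift a ainv σ ν p * kup ainv σ p) := by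
  rw [pdx_kbar2_raw ainv hainvs ν p]
  calc ∑ μ, ∑ α, dX ν (fun y => ainv y μ α) p.1 * p.2 μ * p.2 α
      = ∑ μ, ∑ α, ((-(∑ σ, ainv p.1 μ σ * christoffel a ainv α σ ν p.1)
          - ∑ σ, christoffel a ainv μ σ ν p.1 * ainv p.1 σ α) * p.2 μ * p.2 α) := by
        refine Finset.sum_congr rfl fun μ _ => Finset.sum_congr rfl fun α _ => ?_
        rw [dAinv a ainv hasmooth hainvs hasym hainva haainv μ α ν]
    _ = -(∑ μ, ∑ α, ∑ σ, ainv p.1 μ σ * christoffel a ainv α σ ν p.1 * p.2 μ * p.2 α)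
        - ∑ μ, ∑ α, ∑ σ, christoffel a ainv μ σ ν p.1 * ainv p.1 σ α * p.2 μ * p.2 α := by
        simp only [sub_mul, neg_mul, Finset.sum_mul, Finset.sum_sub_distrib,
          Finset.sum_neg_distrib]
    _ = -(∑ σ, Nlift a ainv σ ν p * kup ainv σ p) - ∑ σ, Nlift a ainv σ ν p * kup ainv σ p := by
        congr 1
        · congr 1
          calc ∑ μ, ∑ α, ∑ σ, ainv p.1 μ σ * christoffel a ainv α σ ν p.1 * p.2 μ * p.2 α
              = ∑ σ, ∑ μ, ∑ α, ainv p.1 μ σ * christoffel a ainv α σ ν p.1 * p.2 μ * p.2 α :=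
                sum_comm3 _
            _ = ∑ σ, (∑ μ, ainv p.1 μ σ * p.2 μ) * (∑ α, christoffel a ainv α σ ν p.1 * p.2 α) := by
                refine Finset.sum_congr rfl fun σ _ => ?_
                rw [Finset.sum_mul_sum]
                refine Finset.sum_congr rfl fun μ _ => Finset.sum_congr rfl fun α _ => by ring
            _ = ∑ σ, Nlift a ainv σ ν p * kup ainv σ p := by
                refine Finset.sum_congr rfl fun σ _ => ?_
                rw [kup_eq_symm ainv hainvsym σ p, Nlift_comm a ainv σ ν p]
                ring
        · calc ∑ μ, ∑ α, ∑ σ, christoffel a ainv μ σ ν p.1 * ainv p.1 σ α * p.2 μ * p.2 α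
              = ∑ σ, ∑ μ, ∑ α, christoffel a ainv μ σ ν p.1 * ainv p.1 σ α * p.2 μ * p.2 α :=
                sum_comm3 _
            _ = ∑ σ, (∑ μ, christoffel a ainv μ σ ν p.1 * p.2 μ) * (∑ α, ainv p.1 σ α * p.2 α) := by
                refine Finset.sum_congr rfl fun σ _ => ?_
                rw [Finset.sum_mul_sum]
                refine Finset.sum_congr rfl fun μ _ => Finset.sum_congr rfl fun α _ => by ring
            _ = ∑ σ, Nlift a ainv σ ν p * kup ainv σ p := by
                refine Finset.sum_congr rfl fun σ _ => ?_
                rw [Nlift_comm a ainv σ ν p]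
                rfl
    _ = -(2 * ∑ σ, Nlift a ainv σ ν p * kup ainv σ p) := by ring

end D


/-! ### Chunk E1: Cconn explicit formula -/

section E1
variable {n : ℕ} (a ainv : (Fin n → ℝ) → Fin n → Fin n → ℝ) (f₁ : ℝ → ℝ)

lemma a_kup (hainva : ∀ x μ ν, ∑ σ, a x μ σ * ainv x σ ν = if μ = ν then (1 : ℝ) else 0)
    (lam : Fin n) (p : Phase n) :
    ∑ σ, a p.1 lam σ * kup ainv σ p = p.2 lam := by
  unfold kup
  calc ∑ σ, a p.1 lam σ * ∑ α, ainv p.1 σ α * p.2 α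
      = ∑ α, ∑ σ, a p.1 lam σ * (ainv p.1 σ α * p.2 α) := mul_sum_comm _ _
    _ = ∑ α, (∑ σ, a p.1 lam σ * ainv p.1 σ α) * p.2 α := by
        refine Finset.sum_congr rfl fun α _ => ?_
        rw [Finset.sum_mul]
        exact Finset.sum_congr rfl fun σ _ => by ring
    _ = ∑ α, (if lam = α then (1:ℝ) else 0) * p.2 α := by
        refine Finset.sum_congr rfl fun α _ => by rw [hainva]
    _ = p.2 lam := sum_if_one_mul lam _

variable (hainvs : ∀ μ ν, ContDiff ℝ (⊤ : ℕ∞) (fun x => ainv x μ ν))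
  (hainvsym : ∀ x μ ν, ainv x μ ν = ainv x ν μ)
  (hf₁ : ContDiff ℝ (⊤ : ℕ∞) f₁) (hf₁pos : ∀ t, 0 < f₁ t)

include hainvs hainvsym hf₁ hf₁pos in
lemma pdk_f1Kinv (μ : Fin n) (p : Phase n) :
    pdk μ (fun q : Phase n => (f₁ (kbar2 ainv q))⁻¹) p
      = -(deriv f₁ (kbar2 ainv p)) / (f₁ (kbar2 ainv p))^2 * (2 * kup ainv μ p) := by
  have hKd : DifferentiableAt ℝ (kbar2 ainv) p :=
    ((kbar2_contDiff ainv hainvs).differentiable (by simp)).differentiableAt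
  have hf₁d : DifferentiableAt ℝ f₁ (kbar2 ainv p) :=
    (hf₁.differentiable (by simp)).differentiableAt
  have hne : f₁ (kbar2 ainv p) ≠ 0 := (hf₁pos _).ne'
  have hhd : DifferentiableAt ℝ (fun t => (f₁ t)⁻¹) (kbar2 ainv p) := hf₁d.inv hne
  rw [pdk_comp hhd hKd, deriv_fun_inv'' hf₁d hne, pdk_kbar2 ainv hainvs hainvsym μ p]

include hainvs hainvsym hf₁ hf₁pos in
lemma pdk_gConfInv (μ σ ν : Fin n) (p : Phase n) :
    pdk μ (gConfInv ainv f₁ σ ν) p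
      = ainv p.1 σ ν * (-(deriv f₁ (kbar2 ainv p)) / (f₁ (kbar2 ainv p))^2
          * (2 * kup ainv μ p)) := by
  have heq : gConfInv ainv f₁ σ ν
      = fun q : Phase n => ainv q.1 σ ν * (f₁ (kbar2 ainv q))⁻¹ :=
    funext fun q => div_eq_mul_inv _ _
  have hd : DifferentiableAt ℝ (fun q : Phase n => ainv q.1 σ ν) p :=
    ((contDiff_ofX (hainvs σ ν)).differentiable (by simp)).differentiableAt
  have hinv : DifferentiableAt ℝ (fun q : Phase n => (f₁ (kbar2 ainv q))⁻¹) p := by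
    have : DifferentiableAt ℝ (fun q : Phase n => f₁ (kbar2 ainv q)) p :=
      ((hf₁.comp (kbar2_contDiff ainv hainvs)).differentiable (by simp)).differentiableAt
    exact this.inv (hf₁pos _).ne'
  rw [heq, pdk_mul hd hinv,
    pdk_ofX (((hainvs σ ν).differentiable (by simp)).differentiableAt),
    pdk_f1Kinv ainv f₁ hainvs hainvsym hf₁ hf₁pos μ p]
  ring

include hainvs hainvsym hf₁ hf₁pos in
lemma Cconn_eq
    (hainva : ∀ x μ ν, ∑ σ, a x μ σ * ainv x σ ν = if μ = ν then (1 : ℝ) else 0)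
    (lam μ ρ : Fin n) (p : Phase n) :
    Cconn a ainv f₁ lam μ ρ p = Cex ainv f₁ lam μ ρ p := by
  have hne : f₁ (kbar2 ainv p) ≠ 0 := (hf₁pos _).ne'
  set F := f₁ (kbar2 ainv p) with hF
  set d := deriv f₁ (kbar2 ainv p) with hd
  set W := -d / F^2 with hW
  unfold Cconn gConf
  calc -(1 / 2 : ℝ) * ∑ σ, (a p.1 lam σ * f₁ (kbar2 ainv p)) *
        (pdk μ (gConfInv ainv f₁ σ ρ) p + pdk ρ (gConfInv ainv f₁ σ μ) p
          - pdk σ (gConfInv ainv f₁ μ ρ) p)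
      = -(1 / 2 : ℝ) * ∑ σ,
          ((a p.1 lam σ * ainv p.1 σ ρ) * (F * W * (2 * kup ainv μ p))
          + (a p.1 lam σ * ainv p.1 σ μ) * (F * W * (2 * kup ainv ρ p))
          - (a p.1 lam σ * kup ainv σ p) * (F * W * (2 * ainv p.1 μ ρ))) := by
        refine congrArg _ (Finset.sum_congr rfl fun σ _ => ?_)
        rw [pdk_gConfInv ainv f₁ hainvs hainvsym hf₁ hf₁pos μ σ ρ p,
          pdk_gConfInv ainv f₁ hainvs hainvsym hf₁ hf₁pos ρ σ μ p,
          pdk_gConfInv ainv f₁ hainvs hainvsym hf₁ hf₁pos σ μ ρ p]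
        rw [← hF, ← hd, ← hW]
        ring
    _ = -(1 / 2 : ℝ) *
          ((∑ σ, a p.1 lam σ * ainv p.1 σ ρ) * (F * W * (2 * kup ainv μ p))
          + (∑ σ, a p.1 lam σ * ainv p.1 σ μ) * (F * W * (2 * kup ainv ρ p))
          - (∑ σ, a p.1 lam σ * kup ainv σ p) * (F * W * (2 * ainv p.1 μ ρ))) := by
        rw [Finset.sum_sub_distrib, Finset.sum_add_distrib,
          Finset.sum_mul, Finset.sum_mul, Finset.sum_mul]
    _ = -(1 / 2 : ℝ) *
          ((if lam = ρ then (1:ℝ) else 0) * (F * W * (2 * kup ainv μ p))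
          + (if lam = μ then (1:ℝ) else 0) * (F * W * (2 * kup ainv ρ p))
          - p.2 lam * (F * W * (2 * ainv p.1 μ ρ))) := by
        rw [hainva, hainva, a_kup a ainv hainva lam p]
    _ = Cex ainv f₁ lam μ ρ p := by
        unfold Cex Gc Tex
        rw [← hF, ← hd, hW]
        by_cases h1 : lam = ρ <;> by_cases h2 : lam = μ
        · have h3 : ρ = μ := h1.symm.trans h2
          simp only [h1, h3, if_true, reduceIte]
          field_simp; ring
        · have h3 : ¬(ρ = μ) := fun h => h2 (h1.trans h)
          simp only [h1, h3, if_true, if_false, reduceIte]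
          field_simp; ring
        · have h3 : ¬(μ = ρ) := fun h => h1 (h2.trans h)
          simp only [h2, h3, if_true, if_false, reduceIte]
          field_simp; ring
        · simp only [if_neg h1, if_neg h2]
          field_simp; ring

end E1


/-! ### Chunk E2: derivatives of Cex -/

section E2
variable {n : ℕ} (ainv : (Fin n → ℝ) → Fin n → Fin n → ℝ) (f₁ : ℝ → ℝ)
variable (hainvs : ∀ μ ν, ContDiff ℝ (⊤ : ℕ∞) (fun x => ainv x μ ν))
  (hainvsym : ∀ x μ ν, ainv x μ ν = ainv x ν μ)
  (hf₁ : ContDiff ℝ (⊤ : ℕ∞) f₁) (hf₁pos : ∀ t, 0 < f₁ t)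

include hainvs in
lemma pdk_Tex (σ lam μ ρ : Fin n) (p : Phase n) :
    pdk σ (Tex ainv lam μ ρ) p
      = (if lam = ρ then ainv p.1 μ σ else 0) + (if lam = μ then ainv p.1 ρ σ else 0)
        - ainv p.1 μ ρ * (if lam = σ then 1 else 0) := by
  have hkupd : ∀ m (q : Phase n), DifferentiableAt ℝ (kup ainv m) q := fun m q =>
    ((kup_contDiff ainv hainvs m).differentiable (by simp)).differentiableAt
  have hifd : ∀ (c : Prop) [Decidable c] (m : Fin n) (q : Phase n),
      DifferentiableAt ℝ (fun q : Phase n => if c then kup ainv m q else 0) q := by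
    intro c _ m q
    by_cases h : c
    · simp only [if_pos h]; exact hkupd m q
    · simp only [if_neg h]; exact differentiableAt_const 0
  have hCd : ∀ q : Phase n, DifferentiableAt ℝ (fun q : Phase n => ainv q.1 μ ρ * q.2 lam) q :=
    fun q => (((contDiff_ofX (hainvs μ ρ)).mul (contDiff_coordk lam)).differentiable
      (by simp)).differentiableAt
  unfold Tex
  rw [pdk_sub ((hifd _ μ p).fun_add (hifd _ ρ p)) (hCd p), pdk_add (hifd _ μ p) (hifd _ ρ p)]
  have h1 : pdk σ (fun q : Phase n => if lam = ρ then kup ainv μ q else 0) p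
      = if lam = ρ then ainv p.1 μ σ else 0 := by
    by_cases h : lam = ρ
    · simp only [if_pos h]; exact pdk_kup ainv hainvs μ σ p
    · simp only [if_neg h]; exact pdk_const 0
  have h2 : pdk σ (fun q : Phase n => if lam = μ then kup ainv ρ q else 0) p
      = if lam = μ then ainv p.1 ρ σ else 0 := by
    by_cases h : lam = μ
    · simp only [if_pos h]; exact pdk_kup ainv hainvs ρ σ p
    · simp only [if_neg h]; exact pdk_const 0
  have h3 : pdk σ (fun q : Phase n => ainv q.1 μ ρ * q.2 lam) p
      = ainv p.1 μ ρ * (if lam = σ then 1 else 0) := by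
    rw [pdk_mul (((contDiff_ofX (hainvs μ ρ)).differentiable (by simp)).differentiableAt)
      (((contDiff_coordk lam).differentiable (by simp)).differentiableAt),
      pdk_ofX (((hainvs μ ρ).differentiable (by simp)).differentiableAt), pdk_k]
    ring
  rw [h1, h2, h3]

include hainvs in
lemma pdx_Tex (ν lam μ ρ : Fin n) (p : Phase n) :
    pdx ν (Tex ainv lam μ ρ) p
      = (if lam = ρ then pdx ν (kup ainv μ) p else 0)
        + (if lam = μ then pdx ν (kup ainv ρ) p else 0)
        - dX ν (fun y => ainv y μ ρ) p.1 * p.2 lam := by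
  have hkupd : ∀ m (q : Phase n), DifferentiableAt ℝ (kup ainv m) q := fun m q =>
    ((kup_contDiff ainv hainvs m).differentiable (by simp)).differentiableAt
  have hifd : ∀ (c : Prop) [Decidable c] (m : Fin n) (q : Phase n),
      DifferentiableAt ℝ (fun q : Phase n => if c then kup ainv m q else 0) q := by
    intro c _ m q
    by_cases h : c
    · simp only [if_pos h]; exact hkupd m q
    · simp only [if_neg h]; exact differentiableAt_const 0
  have hCd : ∀ q : Phase n, DifferentiableAt ℝ (fun q : Phase n => ainv q.1 μ ρ * q.2 lam) q :=
    fun q => (((contDiff_ofX (hainvs μ ρ)).mul (contDiff_coordk lam)).differentiable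
      (by simp)).differentiableAt
  unfold Tex
  rw [pdx_sub ((hifd _ μ p).fun_add (hifd _ ρ p)) (hCd p), pdx_add (hifd _ μ p) (hifd _ ρ p)]
  have h1 : pdx ν (fun q : Phase n => if lam = ρ then kup ainv μ q else 0) p
      = if lam = ρ then pdx ν (kup ainv μ) p else 0 := by
    by_cases h : lam = ρ
    · simp only [if_pos h]
    · simp only [if_neg h]; exact pdx_const 0
  have h2 : pdx ν (fun q : Phase n => if lam = μ then kup ainv ρ q else 0) p
      = if lam = μ then pdx ν (kup ainv ρ) p else 0 := by
    by_cases h : lam = μ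
    · simp only [if_pos h]
    · simp only [if_neg h]; exact pdx_const 0
  have h3 : pdx ν (fun q : Phase n => ainv q.1 μ ρ * q.2 lam) p
      = dX ν (fun y => ainv y μ ρ) p.1 * p.2 lam := by
    rw [pdx_mul (((contDiff_ofX (hainvs μ ρ)).differentiable (by simp)).differentiableAt)
      (((contDiff_coordk lam).differentiable (by simp)).differentiableAt),
      pdx_ofX (((hainvs μ ρ).differentiable (by simp)).differentiableAt), pdx_k]
    ring
  rw [h1, h2, h3]

include hainvs hainvsym hf₁ hf₁pos in
lemma pdk_Cex (σ lam μ ρ : Fin n) (p : Phase n) :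
    pdk σ (Cex ainv f₁ lam μ ρ) p
      = deriv (Gc f₁) (kbar2 ainv p) * (2 * kup ainv σ p) * Tex ainv lam μ ρ p
        + Gc f₁ (kbar2 ainv p) * ((if lam = ρ then ainv p.1 μ σ else 0)
          + (if lam = μ then ainv p.1 ρ σ else 0)
          - ainv p.1 μ ρ * (if lam = σ then 1 else 0)) := by
  have hGKd : DifferentiableAt ℝ (fun q : Phase n => Gc f₁ (kbar2 ainv q)) p :=
    (((Gc_contDiff hf₁ hf₁pos).comp (kbar2_contDiff ainv hainvs)).differentiable
      (by simp)).differentiableAt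
  have hTd : DifferentiableAt ℝ (Tex ainv lam μ ρ) p :=
    ((Tex_contDiff ainv hainvs lam μ ρ).differentiable (by simp)).differentiableAt
  have hGd : DifferentiableAt ℝ (Gc f₁) (kbar2 ainv p) :=
    ((Gc_contDiff hf₁ hf₁pos).differentiable (by simp)).differentiableAt
  have hKd : DifferentiableAt ℝ (kbar2 ainv) p :=
    ((kbar2_contDiff ainv hainvs).differentiable (by simp)).differentiableAt
  have : pdk σ (Cex ainv f₁ lam μ ρ) p
      = pdk σ (fun q => Gc f₁ (kbar2 ainv q) * Tex ainv lam μ ρ q) p := rfl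
  rw [this, pdk_mul hGKd hTd, pdk_comp hGd hKd,
    pdk_kbar2 ainv hainvs hainvsym σ p, pdk_Tex ainv hainvs σ lam μ ρ p]

include hainvs hainvsym hf₁ hf₁pos in
lemma pdx_Cex (ν lam μ ρ : Fin n) (p : Phase n) :
    pdx ν (Cex ainv f₁ lam μ ρ) p
      = deriv (Gc f₁) (kbar2 ainv p) * pdx ν (kbar2 ainv) p * Tex ainv lam μ ρ p
        + Gc f₁ (kbar2 ainv p) * ((if lam = ρ then pdx ν (kup ainv μ) p else 0)
          + (if lam = μ then pdx ν (kup ainv ρ) p else 0)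
          - dX ν (fun y => ainv y μ ρ) p.1 * p.2 lam) := by
  have hGKd : DifferentiableAt ℝ (fun q : Phase n => Gc f₁ (kbar2 ainv q)) p :=
    (((Gc_contDiff hf₁ hf₁pos).comp (kbar2_contDiff ainv hainvs)).differentiable
      (by simp)).differentiableAt
  have hTd : DifferentiableAt ℝ (Tex ainv lam μ ρ) p :=
    ((Tex_contDiff ainv hainvs lam μ ρ).differentiable (by simp)).differentiableAt
  have hGd : DifferentiableAt ℝ (Gc f₁) (kbar2 ainv p) :=
    ((Gc_contDiff hf₁ hf₁pos).differentiable (by simp)).differentiableAt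
  have hKd : DifferentiableAt ℝ (kbar2 ainv) p :=
    ((kbar2_contDiff ainv hainvs).differentiable (by simp)).differentiableAt
  have : pdx ν (Cex ainv f₁ lam μ ρ) p
      = pdx ν (fun q => Gc f₁ (kbar2 ainv q) * Tex ainv lam μ ρ q) p := rfl
  rw [this, pdx_mul hGKd hTd, pdx_comp hGd hKd, pdx_Tex ainv hainvs ν lam μ ρ p]

end E2


/-! ### Chunk F: vanishing of the horizontal covariant derivative and main theorem -/

section F
variable {n : ℕ} (a ainv : (Fin n → ℝ) → Fin n → Fin n → ℝ) (f₁ : ℝ → ℝ)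
variable (hasmooth : ∀ μ ν, ContDiff ℝ (⊤ : ℕ∞) (fun x => a x μ ν))
  (hainvs : ∀ μ ν, ContDiff ℝ (⊤ : ℕ∞) (fun x => ainv x μ ν))
  (hasym : ∀ x μ ν, a x μ ν = a x ν μ)
  (hainvsym : ∀ x μ ν, ainv x μ ν = ainv x ν μ)
  (hainva : ∀ x μ ν, ∑ σ, a x μ σ * ainv x σ ν = if μ = ν then (1 : ℝ) else 0)
  (haainv : ∀ x μ ν, ∑ σ, ainv x μ σ * a x σ ν = if μ = ν then (1 : ℝ) else 0)
  (hf₁ : ContDiff ℝ (⊤ : ℕ∞) f₁) (hf₁pos : ∀ t, 0 < f₁ t)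

include hasmooth hainvs hasym hainvsym hainva haainv hf₁ hf₁pos in
lemma Ccov_zero (lam μ ρ ν : Fin n) (p : Phase n) :
    Ccov a ainv f₁ lam μ ρ ν p = 0 := by
  -- abbreviations
  set G := Gc f₁ (kbar2 ainv p) with hG
  set G' := deriv (Gc f₁) (kbar2 ainv p) with hG'
  set T := Tex ainv lam μ ρ p with hT
  set n1 := ∑ σ, Nlift a ainv σ ν p * kup ainv σ p with hn1
  set n2μ := ∑ σ, Nlift a ainv σ ν p * ainv p.1 μ σ with hn2μ
  set n2ρ := ∑ σ, Nlift a ainv σ ν p * ainv p.1 ρ σ with hn2ρ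
  set g1μ := ∑ σ, christoffel a ainv μ σ ν p.1 * kup ainv σ p with hg1μ
  set g1ρ := ∑ σ, christoffel a ainv ρ σ ν p.1 * kup ainv σ p with hg1ρ
  set g2 := ∑ σ, ainv p.1 μ σ * christoffel a ainv ρ σ ν p.1 with hg2
  set g3 := ∑ σ, christoffel a ainv μ σ ν p.1 * ainv p.1 σ ρ with hg3
  have hCfun : ∀ l m r, Cconn a ainv f₁ l m r = Cex ainv f₁ l m r := fun l m r =>
    funext fun q => Cconn_eq a ainv f₁ hainvs hainvsym hf₁ hf₁pos hainva l m r q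
  -- e1 : pdx of Cex
  have e1 : pdx ν (Cex ainv f₁ lam μ ρ) p
      = G' * (-(2 * n1)) * T
        + G * ((if lam = ρ then -n2μ - g1μ else 0)
          + (if lam = μ then -n2ρ - g1ρ else 0) - (-g2 - g3) * p.2 lam) := by
    rw [pdx_Cex ainv f₁ hainvs hainvsym hf₁ hf₁pos ν lam μ ρ p,
      pdx_kbar2 a ainv hasmooth hainvs hasym hainvsym hainva haainv ν p,
      pdx_kup a ainv hasmooth hainvs hasym hainva haainv μ ν p,
      pdx_kup a ainv hasmooth hainvs hasym hainva haainv ρ ν p,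
      dAinv a ainv hasmooth hainvs hasym hainva haainv μ ρ ν]
  -- e2 : sum over N * pdk of Cex
  have e2 : ∑ σ, Nlift a ainv σ ν p * pdk σ (Cex ainv f₁ lam μ ρ) p
      = G' * (2 * n1) * T
        + G * ((if lam = ρ then n2μ else 0) + (if lam = μ then n2ρ else 0)
          - ainv p.1 μ ρ * Nlift a ainv lam ν p) := by
    calc ∑ σ, Nlift a ainv σ ν p * pdk σ (Cex ainv f₁ lam μ ρ) p
        = ∑ σ, (G' * T * 2 * (Nlift a ainv σ ν p * kup ainv σ p)
            + G * ((if lam = ρ then Nlift a ainv σ ν p * ainv p.1 μ σ else 0)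
              + (if lam = μ then Nlift a ainv σ ν p * ainv p.1 ρ σ else 0)
              - (if lam = σ then Nlift a ainv σ ν p * ainv p.1 μ ρ else 0))) := by
          refine Finset.sum_congr rfl fun σ _ => ?_
          rw [pdk_Cex ainv f₁ hainvs hainvsym hf₁ hf₁pos σ lam μ ρ p, ← hG, ← hG', ← hT]
          split_ifs <;> ring
      _ = G' * T * 2 * n1
          + G * ((if lam = ρ then n2μ else 0) + (if lam = μ then n2ρ else 0)
            - Nlift a ainv lam ν p * ainv p.1 μ ρ) := by
          have hA : (∑ σ, if lam = ρ then Nlift a ainv σ ν p * ainv p.1 μ σ else 0)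
              = (if lam = ρ then n2μ else 0) := by
            by_cases h : lam = ρ <;> simp [h, hn2μ]
          have hB : (∑ σ, if lam = μ then Nlift a ainv σ ν p * ainv p.1 ρ σ else 0)
              = (if lam = μ then n2ρ else 0) := by
            by_cases h : lam = μ <;> simp [h, hn2ρ]
          have hC : (∑ σ, if lam = σ then Nlift a ainv σ ν p * ainv p.1 μ ρ else 0)
              = Nlift a ainv lam ν p * ainv p.1 μ ρ := by simp
          rw [Finset.sum_add_distrib, ← Finset.mul_sum, ← Finset.mul_sum,
            Finset.sum_sub_distrib, Finset.sum_add_distrib, hA, hB, hC]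
      _ = _ := by ring
  -- e3
  have e3 : ∑ σ, Cconn a ainv f₁ lam σ ρ p * Hlift a ainv μ σ ν p
      = G * ((if lam = ρ then g1μ else 0) + kup ainv ρ p * christoffel a ainv μ lam ν p.1
        - g3 * p.2 lam) := by
    calc ∑ σ, Cconn a ainv f₁ lam σ ρ p * Hlift a ainv μ σ ν p
        = ∑ σ, G * (((if lam = ρ then christoffel a ainv μ σ ν p.1 * kup ainv σ p else 0)
            + (if lam = σ then kup ainv ρ p * christoffel a ainv μ σ ν p.1 else 0))
            - christoffel a ainv μ σ ν p.1 * ainv p.1 σ ρ * p.2 lam) := by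
          refine Finset.sum_congr rfl fun σ _ => ?_
          rw [hCfun lam σ ρ, Hlift_eq a ainv hasmooth hainvs μ σ ν p]
          show Gc f₁ (kbar2 ainv p) * Tex ainv lam σ ρ p * christoffel a ainv μ σ ν p.1 = _
          unfold Tex
          rw [← hG]
          split_ifs <;> ring
      _ = G * (((if lam = ρ then g1μ else 0)
            + kup ainv ρ p * christoffel a ainv μ lam ν p.1) - g3 * p.2 lam) := by
          have hA : (∑ σ, if lam = ρ then christoffel a ainv μ σ ν p.1 * kup ainv σ p else 0)
              = (if lam = ρ then g1μ else 0) := by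
            by_cases h : lam = ρ <;> simp [h, hg1μ]
          have hB : (∑ σ, if lam = σ then kup ainv ρ p * christoffel a ainv μ σ ν p.1 else 0)
              = kup ainv ρ p * christoffel a ainv μ lam ν p.1 := by simp
          have hC : (∑ σ, christoffel a ainv μ σ ν p.1 * ainv p.1 σ ρ * p.2 lam)
              = g3 * p.2 lam := by rw [hg3, Finset.sum_mul]
          rw [← Finset.mul_sum, Finset.sum_sub_distrib, Finset.sum_add_distrib, hA, hB, hC]
      _ = _ := by ring
  -- e4
  have e4 : ∑ σ, Cconn a ainv f₁ lam μ σ p * Hlift a ainv ρ σ ν p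
      = G * (kup ainv μ p * christoffel a ainv ρ lam ν p.1 + (if lam = μ then g1ρ else 0)
        - g2 * p.2 lam) := by
    calc ∑ σ, Cconn a ainv f₁ lam μ σ p * Hlift a ainv ρ σ ν p
        = ∑ σ, G * (((if lam = σ then kup ainv μ p * christoffel a ainv ρ σ ν p.1 else 0)
            + (if lam = μ then christoffel a ainv ρ σ ν p.1 * kup ainv σ p else 0))
            - ainv p.1 μ σ * christoffel a ainv ρ σ ν p.1 * p.2 lam) := by
          refine Finset.sum_congr rfl fun σ _ => ?_
          rw [hCfun lam μ σ, Hlift_eq a ainv hasmooth hainvs ρ σ ν p]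
          show Gc f₁ (kbar2 ainv p) * Tex ainv lam μ σ p * christoffel a ainv ρ σ ν p.1 = _
          unfold Tex
          rw [← hG]
          split_ifs <;> ring
      _ = G * ((kup ainv μ p * christoffel a ainv ρ lam ν p.1
            + (if lam = μ then g1ρ else 0)) - g2 * p.2 lam) := by
          have hA : (∑ σ, if lam = σ then kup ainv μ p * christoffel a ainv ρ σ ν p.1 else 0)
              = kup ainv μ p * christoffel a ainv ρ lam ν p.1 := by simp
          have hB : (∑ σ, if lam = μ then christoffel a ainv ρ σ ν p.1 * kup ainv σ p else 0)
              = (if lam = μ then g1ρ else 0) := by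
            by_cases h : lam = μ <;> simp [h, hg1ρ]
          have hC : (∑ σ, ainv p.1 μ σ * christoffel a ainv ρ σ ν p.1 * p.2 lam)
              = g2 * p.2 lam := by rw [hg2, Finset.sum_mul]
          rw [← Finset.mul_sum, Finset.sum_sub_distrib, Finset.sum_add_distrib, hA, hB, hC]
      _ = _ := by ring
  -- e5
  have e5 : ∑ σ, Cconn a ainv f₁ σ μ ρ p * Hlift a ainv σ lam ν p
      = G * (kup ainv μ p * christoffel a ainv ρ lam ν p.1
        + kup ainv ρ p * christoffel a ainv μ lam ν p.1
        - ainv p.1 μ ρ * Nlift a ainv lam ν p) := by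
    calc ∑ σ, Cconn a ainv f₁ σ μ ρ p * Hlift a ainv σ lam ν p
        = ∑ σ, G * (((if σ = ρ then kup ainv μ p * christoffel a ainv σ lam ν p.1 else 0)
            + (if σ = μ then kup ainv ρ p * christoffel a ainv σ lam ν p.1 else 0))
            - ainv p.1 μ ρ * (christoffel a ainv σ lam ν p.1 * p.2 σ)) := by
          refine Finset.sum_congr rfl fun σ _ => ?_
          rw [hCfun σ μ ρ, Hlift_eq a ainv hasmooth hainvs σ lam ν p]
          show Gc f₁ (kbar2 ainv p) * Tex ainv σ μ ρ p * christoffel a ainv σ lam ν p.1 = _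
          unfold Tex
          rw [← hG]
          split_ifs <;> ring
      _ = G * ((kup ainv μ p * christoffel a ainv ρ lam ν p.1
            + kup ainv ρ p * christoffel a ainv μ lam ν p.1)
            - ainv p.1 μ ρ * Nlift a ainv lam ν p) := by
          have hA : (∑ σ, if σ = ρ then kup ainv μ p * christoffel a ainv σ lam ν p.1 else 0)
              = kup ainv μ p * christoffel a ainv ρ lam ν p.1 := by simp
          have hB : (∑ σ, if σ = μ then kup ainv ρ p * christoffel a ainv σ lam ν p.1 else 0)
              = kup ainv ρ p * christoffel a ainv μ lam ν p.1 := by simp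
          have hC : (∑ σ, ainv p.1 μ ρ * (christoffel a ainv σ lam ν p.1 * p.2 σ))
              = ainv p.1 μ ρ * Nlift a ainv lam ν p := by
            rw [← Finset.mul_sum, Nlift_comm a ainv lam ν p]
          rw [← Finset.mul_sum, Finset.sum_sub_distrib, Finset.sum_add_distrib, hA, hB, hC]
      _ = _ := by ring
  -- assemble
  unfold Ccov hderiv
  rw [hCfun lam μ ρ, e1, e2, e3, e4, e5]
  split_ifs <;> ring

end F



/-- For the conformal metric `g_{μν} = a_{μν}(x) f₁(k̄²)` with the GR nonlinear
connection `N_{μν} = k_λ Γ^λ_{μν}`, the intertwining curvature tensor vanishes. -/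
theorem Pcurv_conformal_eq_zero {n : ℕ} (hn : 0 < n)
    (a ainv : (Fin n → ℝ) → Fin n → Fin n → ℝ)
    (hasmooth : ∀ μ ν, ContDiff ℝ (⊤ : ℕ∞) (fun x => a x μ ν))
    (hasym : ∀ x μ ν, a x μ ν = a x ν μ)
    (hainva : ∀ x μ ν, ∑ σ, a x μ σ * ainv x σ ν = if μ = ν then (1 : ℝ) else 0)
    (haainv : ∀ x μ ν, ∑ σ, ainv x μ σ * a x σ ν = if μ = ν then (1 : ℝ) else 0)
    (f₁ : ℝ → ℝ) (hf₁ : ContDiff ℝ (⊤ : ℕ∞) f₁) (hf₁pos : ∀ t, 0 < f₁ t) :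
    ∀ μ ρ lam ν (p : Phase n), Pcurv a ainv f₁ μ ρ lam ν p = 0 := by
  intro μ ρ lam ν p
  have hainvs : ∀ μ ν, ContDiff ℝ (⊤ : ℕ∞) (fun x => ainv x μ ν) :=
    ainv_contDiff a ainv hasmooth hainva
  have hainvsym : ∀ x μ ν, ainv x μ ν = ainv x ν μ := fun x μ ν =>
    ainv_symm a ainv hasym hainva haainv x μ ν
  unfold Pcurv
  rw [pdk_Hlift a ainv hasmooth hainvs ρ μ lam ν p,
    Ccov_zero a ainv f₁ hasmooth hainvs hasym hainvsym hainva haainv hf₁ hf₁pos lam μ ρ ν p]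
  have hsum : ∑ σ, Cconn a ainv f₁ lam μ σ p * Ptens a ainv ρ σ ν p = 0 := by
    refine Finset.sum_eq_zero fun σ _ => ?_
    rw [Ptens_zero a ainv hasmooth hainvs hasym ρ σ ν p, mul_zero]
  rw [hsum]; ring
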